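/- arXiv:2206.11406 — 3 statements merged into one kernel-verified Lean document; each statement's English description precedes it below -/
import Mathlib

section
/- For an injective word w = (a_1,...,a_ℓ) of length ℓ on {1,...,n}, the number of pairs (c, u) with c a single letter and u an injective word of length ℓ such that (c)·u = w equals ℓ. Explicitly, these pairs are c = a_1 and u obtained from (a_2,...,a_ℓ) by inserting a_1 in any of the ℓ possible positions among or after a_2,...,a_ℓ (including between each pair of consecutive letters and at the end). -/
/-- An injective word on the alphabet `{1,...,n}` (modeled as `Fin n`). -/
abbrev InjWord (n : ℕ) := {l : List (Fin n) // l.Nodup}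

/-- The product of injective words: concatenate and delete any letter that
already occurred earlier in the concatenation.  In particular `(c)·u`
prepends the letter `c` to `u` and removes any later occurrence of `c`. -/
instance {n : ℕ} : Mul (InjWord n) :=
  ⟨fun a b => ⟨a.1 ++ b.1.filter (fun x => x ∉ a.1), by
    refine List.Nodup.append a.2 (b.2.filter _) ?_
    intro x hx hy
    simp only [List.mem_filter, decide_eq_true_eq] at hy
    exact hy.2 hx⟩⟩

section Aux

variable {α : Type*} [DecidableEq α]

lemma aux_filter_singleton_eq_erase (u : List α) (c : α) (hu : u.Nodup) :
    u.filter (fun x => x ∉ [c]) = u.erase c := by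
  rw [hu.erase_eq_filter]
  apply List.filter_congr
  intro x _
  by_cases h : x = c <;> simp [h, bne]

lemma aux_erase_insertIdx (a : α) :
    ∀ (k : ℕ) (t : List α), k ≤ t.length → a ∉ t → (t.insertIdx k a).erase a = t := by
  intro k
  induction k with
  | zero => intro t _ _; simp [List.insertIdx_zero]
  | succ k ih =>
    intro t ht ha
    cases t with
    | nil => simp at ht
    | cons b t' =>
      have hab : b ≠ a := by
        intro h; exact ha (h ▸ (List.mem_cons_self : b ∈ b :: t'))
      rw [List.insertIdx_succ_cons, List.erase_cons_tail (by simp [hab]),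
        ih t' (by simpa using ht) (fun h => ha (List.mem_cons_of_mem _ h))]

lemma aux_indexOf_insertIdx (a : α) :
    ∀ (k : ℕ) (t : List α), k ≤ t.length → a ∉ t → (t.insertIdx k a).idxOf a = k := by
  intro k
  induction k with
  | zero => intro t _ _; simp [List.insertIdx_zero]
  | succ k ih =>
    intro t ht ha
    cases t with
    | nil => simp at ht
    | cons b t' =>
      have hab : b ≠ a := by
        intro h; exact ha (h ▸ (List.mem_cons_self : b ∈ b :: t'))
      rw [List.insertIdx_succ_cons, List.idxOf_cons_ne _ hab,
        ih t' (by simpa using ht) (fun h => ha (List.mem_cons_of_mem _ h))]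

lemma aux_insertIdx_erase :
    ∀ (u : List α) (c : α), c ∈ u → (u.erase c).insertIdx (u.idxOf c) c = u := by
  intro u
  induction u with
  | nil => intro c hc; simp at hc
  | cons b u' ih =>
    intro c hc
    by_cases hbc : b = c
    · subst hbc
      simp [List.insertIdx_zero]
    · rw [List.erase_cons_tail (by simp [hbc]), List.idxOf_cons_ne _ hbc,
        List.insertIdx_succ_cons,
        ih c (by cases List.mem_cons.mp hc with
          | inl h => exact absurd h.symm hbc
          | inr h => exact h)]

end Aux

/-- For an injective word `w = (a_1,...,a_ℓ)` of length `ℓ`, the number of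
pairs `(c, u)` with `c` a single letter and `u` an injective word of length
`ℓ` such that `(c)·u = w` equals `ℓ`.  Moreover every such pair has
`c = a_1`, and `u` is obtained from `(a_2,...,a_ℓ)` by inserting the letter
`a_1` somewhere (i.e. deleting `a_1` from `u` recovers `(a_2,...,a_ℓ)`). -/
theorem injWord_count_factorizations (n ℓ : ℕ) (w : InjWord n)
    (hw : w.1.length = ℓ) :
    (Finset.univ.filter (fun p : Fin n × InjWord n =>
        p.2.1.length = ℓ ∧
        (⟨[p.1], List.nodup_singleton p.1⟩ : InjWord n) * p.2 = w)).card = ℓ ∧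
    ∀ p : Fin n × InjWord n,
      (p.2.1.length = ℓ ∧
        (⟨[p.1], List.nodup_singleton p.1⟩ : InjWord n) * p.2 = w) →
      w.1.head? = some p.1 ∧ p.2.1.erase p.1 = w.1.tail := by
  -- First unpack the multiplication condition.
  have hmul : ∀ p : Fin n × InjWord n,
      ((⟨[p.1], List.nodup_singleton p.1⟩ : InjWord n) * p.2 = w) ↔
      p.1 :: p.2.1.filter (fun x => x ∉ [p.1]) = w.1 :=
    fun p => ⟨fun h => congrArg Subtype.val h, fun h => Subtype.ext h⟩
  have key : ∀ p : Fin n × InjWord n,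
      (p.2.1.length = ℓ ∧
        (⟨[p.1], List.nodup_singleton p.1⟩ : InjWord n) * p.2 = w) →
      w.1.head? = some p.1 ∧ p.2.1.erase p.1 = w.1.tail ∧ p.1 ∈ p.2.1 := by
    intro p ⟨hlen, hp⟩
    rw [hmul] at hp
    rw [aux_filter_singleton_eq_erase _ _ p.2.2] at hp
    have hhead : w.1.head? = some p.1 := by rw [← hp]; rfl
    have htail : p.2.1.erase p.1 = w.1.tail := by rw [← hp]; rfl
    refine ⟨hhead, htail, ?_⟩
    by_contra hmem
    have hlw : w.1.length = p.2.1.length + 1 := by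
      rw [← hp, List.length_cons, List.erase_of_not_mem hmem]
    omega
  refine ⟨?_, fun p hp => ⟨(key p hp).1, (key p hp).2.1⟩⟩
  -- Now the counting part.
  rcases Nat.eq_zero_or_pos ℓ with hℓ | hℓ
  · subst hℓ
    rw [Finset.card_eq_zero, Finset.filter_eq_empty_iff]
    intro p _ hp
    have hh := (key p hp).1
    rcases w with ⟨wl, hwl⟩
    cases wl with
    | nil => simp at hh
    | cons a t => simp at hw
  · -- ℓ ≥ 1 : w = a :: t
    obtain ⟨a, t, hat⟩ : ∃ a t, w.1 = a :: t := by
      rcases w with ⟨wl, hwl⟩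
      cases wl with
      | nil => simp at hw; omega
      | cons a t => exact ⟨a, t, rfl⟩
    have hanotm : a ∉ t := by
      have hn := w.2; rw [hat] at hn; exact (List.nodup_cons.mp hn).1
    have htlen : t.length = ℓ - 1 := by
      rw [hat] at hw; simp at hw; omega
    have hcard := Finset.card_bij'
      (s := Finset.univ.filter (fun p : Fin n × InjWord n =>
        p.2.1.length = ℓ ∧
        (⟨[p.1], List.nodup_singleton p.1⟩ : InjWord n) * p.2 = w))
      (t := Finset.range ℓ)
      (fun p _ => p.2.1.idxOf p.1)
      (fun k hk => (a, ⟨t.insertIdx k a, by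
        have hkle : k ≤ t.length := by
          have := Finset.mem_range.mp hk; omega
        exact ((List.perm_insertIdx a t hkle).nodup_iff).mpr (hat ▸ w.2)⟩))
      (by -- maps into range ℓ
        intro p hp
        rw [Finset.mem_filter] at hp
        obtain ⟨-, hlen, hpmul⟩ := hp
        exact Finset.mem_range.mpr (lt_of_lt_of_le
          (List.idxOf_lt_length_iff.mpr (key p ⟨hlen, hpmul⟩).2.2) (le_of_eq hlen)))
      (by -- maps into the filter set
        intro k hk
        have hkle : k ≤ t.length := by
          have := Finset.mem_range.mp hk; omega
        have hnd : (t.insertIdx k a).Nodup :=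
          ((List.perm_insertIdx a t hkle).nodup_iff).mpr (hat ▸ w.2)
        rw [Finset.mem_filter]
        refine ⟨Finset.mem_univ _, ?_, ?_⟩
        · show (t.insertIdx k a).length = ℓ
          rw [List.length_insertIdx_of_le_length hkle]; omega
        · rw [hmul]
          show a :: (t.insertIdx k a).filter (fun x => x ∉ [a]) = w.1
          rw [aux_filter_singleton_eq_erase _ _ hnd,
            aux_erase_insertIdx a k t hkle hanotm, hat])
      (by -- left inverse
        intro p hp
        rw [Finset.mem_filter] at hp
        obtain ⟨-, hlen, hpmul⟩ := hp
        obtain ⟨hhead, htail, hm⟩ := key p ⟨hlen, hpmul⟩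
        have hca : p.1 = a := by
          rw [hat] at hhead; simpa using hhead.symm
        have ht' : p.2.1.erase p.1 = t := by rw [htail, hat, List.tail_cons]
        have hval : (t.insertIdx (p.2.1.idxOf p.1) a : List (Fin n)) = p.2.1 := by
          rw [← hca, ← ht']
          exact aux_insertIdx_erase p.2.1 p.1 hm
        rw [Prod.ext_iff]
        exact ⟨hca.symm, Subtype.ext hval⟩)
      (by -- right inverse
        intro k hk
        have hkle : k ≤ t.length := by
          have := Finset.mem_range.mp hk; omega
        exact aux_indexOf_insertIdx a k t hkle hanotm)
    rw [hcard, Finset.card_range]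
end

section
/- The derangement symmetric functions d_n, defined by d_0 = 1 and d_n = h_1·d_{n-1} + (-1)^n·e_n for n ≥ 1, satisfy for all n ≥ 0 the identity h_1^n = Σ_{j=0}^n d_j · h_{n-j}, where h_m is the m-th complete homogeneous symmetric function. -/
open MvPolynomial

variable (σ : Type*) [Fintype σ] [DecidableEq σ]

set_option linter.unusedSectionVars false

noncomputable def Gser (i : σ) : PowerSeries (MvPolynomial σ ℤ) :=
  PowerSeries.mk fun k => (X i : MvPolynomial σ ℤ) ^ k

lemma geom_mul (i : σ) :
    (1 - PowerSeries.C (R := MvPolynomial σ ℤ) (X i) * PowerSeries.X) * Gser σ i = 1 := by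
  ext n
  rw [sub_mul, one_mul, mul_assoc, map_sub]
  cases n with
  | zero => simp [Gser]
  | succ n =>
      rw [PowerSeries.coeff_C_mul, PowerSeries.coeff_succ_X_mul]
      simp [Gser, pow_succ, mul_comm]

set_option linter.unusedSectionVars false

lemma coeff_E (s : Finset σ) (j : ℕ) :
    PowerSeries.coeff j (∏ i ∈ s, (1 - PowerSeries.C (R := MvPolynomial σ ℤ) (X i) * PowerSeries.X)) =
      (-1) ^ j * ∑ t ∈ s.powersetCard j, ∏ i ∈ t, (X i : MvPolynomial σ ℤ) := by
  induction s using Finset.induction generalizing j with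
  | empty =>
      cases j with
      | zero => simp
      | succ j =>
          rw [Finset.powersetCard_eq_empty.mpr (by simp)]
          simp [PowerSeries.coeff_one]
  | @insert a s ha ih =>
      rw [Finset.prod_insert ha, sub_mul, one_mul, map_sub, mul_assoc,
        PowerSeries.coeff_C_mul]
      cases j with
      | zero =>
          simp [ih 0]
      | succ j =>
          rw [PowerSeries.coeff_succ_X_mul, ih, ih, Finset.powersetCard_succ_insert ha,
            Finset.sum_union, Finset.sum_image]
          · ring_nf
            rw [Finset.sum_congr rfl (fun t ht => Finset.prod_insert
              (fun h => ha ((Finset.mem_powersetCard.mp ht).1 h)))]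
            rw [Finset.mul_sum, Nat.add_comm 1 j]
          · intro x hx y hy hxy
            have hx' := (Finset.mem_powersetCard.mp hx).1
            have hy' := (Finset.mem_powersetCard.mp hy).1
            have h2 : (insert a x).erase a = (insert a y).erase a := by rw [hxy]
            rwa [Finset.erase_insert (fun h => ha (hx' h)),
              Finset.erase_insert (fun h => ha (hy' h))] at h2
          · rw [Finset.disjoint_right]
            rintro t ht hts
            simp only [Finset.mem_image] at ht
            obtain ⟨u, hu, rfl⟩ := ht
            exact ha ((Finset.mem_powersetCard.mp hts).1 (Finset.mem_insert_self a u))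

lemma coeff_H (n : ℕ) :
    PowerSeries.coeff n (∏ i : σ, Gser σ i) = hsymm σ ℤ n := by
  rw [PowerSeries.coeff_prod]
  simp only [Gser, PowerSeries.coeff_mk]
  rw [hsymm]
  refine Finset.sum_bij' (fun l _ => (⟨Finsupp.toMultiset l, ?_⟩ : Sym σ n))
    (fun s _ => Multiset.toFinsupp s.1) ?_ ?_ ?_ ?_ ?_
  · rename_i l hl
    rw [Finset.mem_finsuppAntidiag] at hl
    rw [Finsupp.card_toMultiset, Finsupp.sum_fintype _ _ (fun _ => rfl)]
    exact hl.1
  · intro l hl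
    exact Finset.mem_univ _
  · intro s hs
    rw [Finset.mem_finsuppAntidiag]
    constructor
    · have : ∑ i, Multiset.count i (s.1 : Multiset σ) = n := by
        rw [Multiset.sum_count_eq_card (fun a _ => Finset.mem_univ a)]
        exact s.2
      exact (Finset.sum_congr rfl (fun i _ => Multiset.toFinsupp_apply _ _)).trans this
    · exact Finset.subset_univ _
  · intro l hl
    simp
  · intro s hs
    exact Sym.ext (by simp)
  · intro l hl
    rw [Finset.prod_multiset_map_count, ← Finset.prod_subset
      (Finset.subset_univ (Finsupp.toMultiset l).toFinset) (fun x _ hx => by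
        rw [show l x = 0 by simpa [Finsupp.mem_support_iff] using hx, pow_zero])]
    exact Finset.prod_congr rfl (fun i _ => by rw [Finsupp.count_toMultiset])

lemma newton_eh (n : ℕ) (hn : 1 ≤ n) :
    ∑ j ∈ Finset.range (n + 1), (-1 : MvPolynomial σ ℤ) ^ j * esymm σ ℤ j * hsymm σ ℤ (n - j)
      = 0 := by
  have hEH : (∏ i : σ, (1 - PowerSeries.C (R := MvPolynomial σ ℤ) (X i) * PowerSeries.X)) *
      (∏ i : σ, Gser σ i) = 1 := by
    rw [← Finset.prod_mul_distrib]
    rw [Finset.prod_congr rfl (fun i _ => geom_mul σ i), Finset.prod_const_one]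
  have h := congrArg (PowerSeries.coeff n) hEH
  rw [PowerSeries.coeff_mul, Finset.Nat.sum_antidiagonal_eq_sum_range_succ_mk,
    PowerSeries.coeff_one, if_neg (by omega)] at h
  rw [← h]
  refine Finset.sum_congr rfl fun j hj => ?_
  rw [coeff_E, coeff_H, esymm, mul_assoc]

/-- The Désarménien–Wachs derangement symmetric functions, defined by
`d_0 = 1` and `d_n = h_1·d_{n-1} + (-1)^n e_n`, in the ring of symmetric
functions (realized in `MvPolynomial σ ℤ`). -/
noncomputable def derangementSym : ℕ → MvPolynomial σ ℤ
  | 0 => 1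
  | n + 1 =>
      hsymm σ ℤ 1 * derangementSym n + (-1) ^ (n + 1) * esymm σ ℤ (n + 1)

/-- `h_1^n = Σ_{j=0}^n d_j · h_{n-j}` for all `n ≥ 0`. -/
theorem hsymm_one_pow_eq_sum_derangementSym (n : ℕ) :
    hsymm σ ℤ 1 ^ n =
      ∑ j ∈ Finset.range (n + 1), derangementSym σ j * hsymm σ ℤ (n - j) := by
  induction n with
  | zero => simp [derangementSym]
  | succ n ih =>
      have hN := newton_eh σ (n + 1) (by omega)
      rw [Finset.sum_range_succ'] at hN
      simp only [Nat.succ_sub_succ, pow_zero, one_mul, esymm_zero, Nat.sub_zero, mul_assoc] at hN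
      rw [Finset.sum_range_succ']
      simp only [derangementSym, Nat.succ_sub_succ, Nat.sub_zero, one_mul, add_mul,
        Finset.sum_add_distrib, mul_assoc, ← Finset.mul_sum]
      rw [pow_succ, ih]
      linear_combination -hN
end

section
/- A permutation w of {1,...,n} is a desarrangement if the smallest element of {1,...,n} not in its descent set Des(w) = {i : w(i) > w(i+1)} (with the convention w(n+1) = n+1) is even. The number of desarrangements of {1,...,n} equals the number of derangements of {1,...,n}, i.e., equals d_n = n!·Σ_{k=0}^n (-1)^k/k!. -/
/-- The one-line notation of `w`, extended by the convention `w(j) = j` for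
positions beyond `n` (0-indexed; this encodes `w(n+1) = n+1`). -/
def oneLineExt {n : ℕ} (w : Equiv.Perm (Fin n)) (j : ℕ) : ℕ :=
  if h : j < n then (w ⟨j, h⟩ : ℕ) else j

/-- The set `{1,...,n} \ Des(w)` of positions `i` that are *not* descents of
`w`, i.e. with `w(i) < w(i+1)` (1-indexed, with the convention
`w(n+1) = n+1`, so `i = n` is always a non-descent). -/
def nonDescents {n : ℕ} (w : Equiv.Perm (Fin n)) : Finset ℕ :=
  (Finset.Icc 1 n).filter fun i => oneLineExt w (i - 1) < oneLineExt w i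

/-- `w` is a desarrangement if the smallest element of `{1,...,n} \ Des(w)`
(equivalently, its first ascent) is even. -/
def IsDesarrangement {n : ℕ} (w : Equiv.Perm (Fin n)) : Prop :=
  ∃ i ∈ nonDescents w, Even i ∧ ∀ j ∈ nonDescents w, i ≤ j


open Finset Equiv

/-- `w` is strictly descending on its first `i` entries (pairwise form). -/
def DD (n i : ℕ) (w : Equiv.Perm (Fin n)) : Prop :=
  ∀ a b : Fin n, a < b → (b : ℕ) < i → w b < w a

lemma oneLineExt_lt {n : ℕ} (w : Equiv.Perm (Fin n)) {j : ℕ} (h : j < n) :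
    oneLineExt w j = (w ⟨j, h⟩ : ℕ) := dif_pos h

lemma oneLineExt_ge {n : ℕ} (w : Equiv.Perm (Fin n)) {j : ℕ} (h : ¬ j < n) :
    oneLineExt w j = j := dif_neg h

lemma n_mem_nonDescents {n : ℕ} (hn : 1 ≤ n) (w : Equiv.Perm (Fin n)) :
    n ∈ nonDescents w := by
  unfold nonDescents
  rw [Finset.mem_filter, Finset.mem_Icc]
  refine ⟨⟨hn, le_refl n⟩, ?_⟩
  rw [oneLineExt_ge w (lt_irrefl n), oneLineExt_lt w (by omega : n - 1 < n)]
  exact (w _).isLt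

lemma le_min_iff_DD {n i : ℕ} (hi : i ≤ n) (w : Equiv.Perm (Fin n)) :
    (∀ j ∈ nonDescents w, i ≤ j) ↔ DD n i w := by
  constructor
  · intro h
    have adj : ∀ a b : Fin n, (a : ℕ) + 1 = (b : ℕ) → (b : ℕ) < i → w b < w a := by
      intro a b hab hbi
      by_contra hle
      push_neg at hle
      have hne : w a ≠ w b := fun he => by
        have := congrArg Fin.val (w.injective he); omega
      have hlt : w a < w b := lt_of_le_of_ne hle hne
      have hmem : (b : ℕ) ∈ nonDescents w := by
        unfold nonDescents
        rw [Finset.mem_filter, Finset.mem_Icc]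
        refine ⟨⟨by omega, by omega⟩, ?_⟩
        rw [oneLineExt_lt w (show (b : ℕ) - 1 < n by omega), oneLineExt_lt w b.isLt]
        have heq : (⟨(b : ℕ) - 1, by omega⟩ : Fin n) = a := by apply Fin.ext; simp only [Fin.val_mk]; omega
        rw [heq]
        have heq2 : (⟨(b : ℕ), b.isLt⟩ : Fin n) = b := Fin.ext rfl
        rw [heq2]
        exact hlt
      have := h _ hmem
      omega
    suffices H : ∀ k (a b : Fin n), (b : ℕ) = (a : ℕ) + k + 1 → (b : ℕ) < i → w b < w a by
      intro a b hab hbi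
      exact H ((b : ℕ) - (a : ℕ) - 1) a b (by rw [Fin.lt_def] at hab; omega) hbi
    intro k
    induction k with
    | zero => intro a b hb hbi; exact adj a b (by omega) hbi
    | succ k IH =>
      intro a b hb hbi
      have hm : (a : ℕ) + k + 1 < n := by have := b.isLt; omega
      set m : Fin n := ⟨(a : ℕ) + k + 1, hm⟩ with hmdef
      exact lt_trans (adj m b (by simp [hmdef]; omega) hbi) (IH a m rfl (by simp [hmdef]; omega))
  · intro hDD j hj
    by_contra hji
    push_neg at hji
    unfold nonDescents at hj
    rw [Finset.mem_filter, Finset.mem_Icc] at hj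
    obtain ⟨⟨hj1, hjn⟩, hasc⟩ := hj
    have hjn' : j < n := by omega
    rw [oneLineExt_lt w (show j - 1 < n by omega), oneLineExt_lt w hjn'] at hasc
    have := hDD ⟨j - 1, by omega⟩ ⟨j, hjn'⟩ (by rw [Fin.lt_def]; simp; omega) (by simpa using hji)
    rw [Fin.lt_def] at this
    omega

def qq (n i : ℕ) : ℚ := if i ≤ n then (n.factorial : ℚ) / i.factorial else 0

lemma qq_succ {n i : ℕ} (hi : i ≤ n) : qq (n+1) i = (n+1) * qq n i := by
  simp only [qq, if_pos hi, if_pos (hi.trans (Nat.le_succ n)), Nat.factorial_succ]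
  push_cast; ring

lemma qq_self (n : ℕ) : qq n n = 1 := by
  simp [qq, div_self (Nat.cast_ne_zero.mpr n.factorial_ne_zero : (n.factorial:ℚ) ≠ 0)]

lemma qq_gt {n i : ℕ} (h : n < i) : qq n i = 0 := by simp [qq, Nat.not_le.mpr h]

lemma sum_tele : ∀ n, 1 ≤ n →
    ∑ i ∈ Icc 1 n, (if Even i then qq n i - qq n (i+1) else 0)
      = ∑ k ∈ range (n+1), (-1:ℚ)^k * (n.factorial / k.factorial) := by
  intro n
  induction n with
  | zero => intro h; omega
  | succ n ih =>
    intro _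
    rcases Nat.eq_zero_or_pos n with rfl | hn
    · rw [Finset.sum_range_succ, Finset.sum_range_succ]
      norm_num [qq]
    have step : ∀ i ∈ Icc 1 n, (if Even i then qq (n+1) i - qq (n+1) (i+1) else 0)
        = (n+1) * (if Even i then qq n i - qq n (i+1) else 0)
          + (if i = n then (if Even n then (-1:ℚ) else 0) else 0) := by
      intro i hi
      obtain ⟨hi1, hin⟩ := Finset.mem_Icc.mp hi
      by_cases he : Even i
      · rw [if_pos he, if_pos he, qq_succ hin]
        rcases Nat.lt_or_ge i n with hlt | hge
        · rw [qq_succ hlt, if_neg (by omega)]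
          ring
        · have hieq : i = n := le_antisymm hin hge
          subst hieq
          rw [if_pos rfl, if_pos he, qq_self (i+1), qq_gt (Nat.lt_succ_self i)]
          ring
      · rw [if_neg he, if_neg he]
        rcases eq_or_ne i n with rfl | hne
        · rw [if_pos rfl, if_neg (fun h => he h)]; ring
        · rw [if_neg hne]; ring
    rw [Finset.sum_Icc_succ_top (by omega : 1 ≤ n + 1), Finset.sum_congr rfl step,
      Finset.sum_add_distrib, ← Finset.mul_sum, ih hn,
      Finset.sum_ite_eq' (Icc 1 n) n (fun _ => if Even n then (-1:ℚ) else 0),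
      if_pos (Finset.mem_Icc.mpr ⟨hn, le_refl n⟩)]
    have hlast : (if Even (n+1) then qq (n+1) (n+1) - qq (n+1) (n+1+1) else 0)
        = if Even (n+1) then (1:ℚ) else 0 := by
      rw [qq_self (n+1), qq_gt (Nat.lt_succ_self (n+1))]
      simp
    rw [hlast]
    have hrhs : ∑ k ∈ range (n+1+1), (-1:ℚ)^k * ((n+1).factorial / k.factorial)
        = (n+1) * (∑ k ∈ range (n+1), (-1:ℚ)^k * (n.factorial / k.factorial)) + (-1)^(n+1) := by
      rw [Finset.sum_range_succ, Finset.mul_sum]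
      have h1 : ((n+1).factorial : ℚ) / (n+1).factorial = 1 :=
        div_self (Nat.cast_ne_zero.mpr (n+1).factorial_ne_zero)
      rw [h1, mul_one]
      congr 1
      refine Finset.sum_congr rfl fun k _ => ?_
      rw [Nat.factorial_succ]
      push_cast; ring
    rw [hrhs]
    rcases Nat.even_or_odd n with he | ho
    · rw [if_pos he, if_neg (by simp [Nat.even_add_one, he]),
        Odd.neg_one_pow (by simp [Nat.odd_add_one, he])]
      ring
    · rw [if_neg (Nat.not_even_iff_odd.mpr ho), if_pos (Nat.even_add_one.mpr (Nat.not_even_iff_odd.mpr ho)),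
        Even.neg_one_pow (Nat.even_add_one.mpr (Nat.not_even_iff_odd.mpr ho))]
      ring

instance (n i : ℕ) : DecidablePred (DD n i) := fun w => by unfold DD; infer_instance

def embi {n i : ℕ} (hi : i ≤ n) : Fin i ≃ {x : Fin n // (x : ℕ) < i} where
  toFun j := ⟨Fin.castLE hi j, j.isLt⟩
  invFun x := ⟨x.1.1, x.2⟩
  left_inv j := rfl
  right_inv x := rfl

def ePerm {n i : ℕ} (hi : i ≤ n) (σ : Perm (Fin i)) : Perm (Fin n) :=
  σ.extendDomain (embi hi)

lemma ePerm_castLE {n i : ℕ} (hi : i ≤ n) (σ : Perm (Fin i)) (j : Fin i) :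
    ePerm hi σ (Fin.castLE hi j) = Fin.castLE hi (σ j) :=
  σ.extendDomain_apply_image (embi hi) j

lemma ePerm_mul {n i : ℕ} (hi : i ≤ n) (σ τ : Perm (Fin i)) :
    ePerm hi σ * ePerm hi τ = ePerm hi (σ * τ) :=
  Equiv.Perm.extendDomain_mul _ σ τ

/-- uniqueness : if both `v` and `v * ePerm ρ` are descending on first `i`, `ρ = 1`. -/
lemma ePerm_eq_one {n i : ℕ} (hi : i ≤ n) (v : Perm (Fin n)) (ρ : Perm (Fin i))
    (h1 : DD n i v) (h2 : DD n i (v * ePerm hi ρ)) : ρ = 1 := by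
  have hmono : StrictMono ρ := by
    intro a b hab
    have h2' := h2 (Fin.castLE hi a) (Fin.castLE hi b) (by simpa using hab) (by simp [(b.isLt)])
    simp only [Equiv.Perm.mul_apply, ePerm_castLE] at h2'
    by_contra hle
    push_neg at hle
    rcases eq_or_lt_of_le hle with heq | hlt
    · exact absurd (ρ.injective heq) hab.ne'
    · exact lt_asymm h2'
        (h1 (Fin.castLE hi (ρ b)) (Fin.castLE hi (ρ a)) (by simpa using hlt) (by simp [(ρ a).isLt]))
  have hmono' : StrictMono ρ.symm := by
    intro a b hab
    rcases lt_trichotomy (ρ.symm a) (ρ.symm b) with h | h | h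
    · exact h
    · exact absurd (congrArg ρ h) (by simpa using hab.ne)
    · exact absurd (by simpa using hmono h) (not_lt.mpr hab.le)
  ext j
  haveI : WellFoundedLT (Fin i) := inferInstance
  have ha : j ≤ ρ j := hmono.le_apply
  have hb : ρ j ≤ ρ.symm (ρ j) := hmono'.le_apply
  rw [Equiv.symm_apply_apply] at hb
  exact congrArg Fin.val (le_antisymm hb ha)

lemma ePerm_inv {n i : ℕ} (hi : i ≤ n) (σ : Perm (Fin i)) :
    (ePerm hi σ)⁻¹ = ePerm hi σ⁻¹ :=
  Equiv.Perm.extendDomain_inv σ _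

lemma ePerm_one {n i : ℕ} (hi : i ≤ n) : ePerm hi 1 = 1 :=
  Equiv.Perm.extendDomain_one _

lemma exists_sort {n i : ℕ} (hi : i ≤ n) (w : Perm (Fin n)) :
    ∃ σ : Perm (Fin i), DD n i (w * ePerm hi σ) := by
  set f : Fin i → ℕ := fun j => n - (w (Fin.castLE hi j) : ℕ) with hf
  have hinj : Function.Injective f := by
    intro a b hab
    have ha : (w (Fin.castLE hi a) : ℕ) < n := (w _).isLt
    have hb : (w (Fin.castLE hi b) : ℕ) < n := (w _).isLt
    have hv : (w (Fin.castLE hi a) : ℕ) = w (Fin.castLE hi b) := by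
      simp only [hf] at hab; omega
    exact Fin.castLE_injective hi (w.injective (Fin.val_injective hv))
  set τ := Tuple.sort f with hτ
  have hmono : StrictMono (f ∘ τ) :=
    (Tuple.monotone_sort f).strictMono_of_injective (hinj.comp τ.injective)
  refine ⟨τ, ?_⟩
  intro a b hab hbi
  have ha' : (a : ℕ) < i := lt_trans hab hbi
  set a' : Fin i := ⟨a, ha'⟩ with ha'def
  set b' : Fin i := ⟨b, hbi⟩ with hb'def
  have lt' : a' < b' := hab
  have hfm := hmono lt'
  simp only [Function.comp_apply, hf] at hfm
  have h1 : (w (Fin.castLE hi (τ a')) : ℕ) < n := (w _).isLt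
  have h2 : (w (Fin.castLE hi (τ b')) : ℕ) < n := (w _).isLt
  have ea : (w * ePerm hi τ) a = w (Fin.castLE hi (τ a')) := by
    rw [Equiv.Perm.mul_apply, show a = Fin.castLE hi a' from Fin.ext rfl, ePerm_castLE]
  have eb : (w * ePerm hi τ) b = w (Fin.castLE hi (τ b')) := by
    rw [Equiv.Perm.mul_apply, show b = Fin.castLE hi b' from Fin.ext rfl, ePerm_castLE]
  rw [Fin.lt_def, ea, eb]
  omega

lemma DD_card_mul {n i : ℕ} (hi : i ≤ n) :
    (Finset.univ.filter (DD n i)).card * i.factorial = n.factorial := by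
  classical
  have key : Fintype.card ({v : Perm (Fin n) // DD n i v} × Perm (Fin i))
      = Fintype.card (Perm (Fin n)) := by
    apply Fintype.card_congr
    apply Equiv.ofBijective (fun p => (p.1 : Perm (Fin n)) * ePerm hi p.2)
    constructor
    · rintro ⟨⟨v₁, hd₁⟩, σ₁⟩ ⟨⟨v₂, hd₂⟩, σ₂⟩ heq
      simp only at heq
      have hv2 : v₁ * ePerm hi (σ₁ * σ₂⁻¹) = v₂ := by
        rw [← ePerm_mul, ← ePerm_inv, ← mul_assoc, heq, mul_assoc, mul_inv_cancel, mul_one]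
      have hρ : σ₁ * σ₂⁻¹ = 1 := ePerm_eq_one hi v₁ _ hd₁ (hv2 ▸ hd₂)
      have hσ : σ₁ = σ₂ := by
        rw [mul_inv_eq_one] at hρ; exact hρ
      subst hσ
      have hv : v₁ = v₂ := by
        have := mul_right_cancel heq; exact this
      simp [hv]
    · intro w
      obtain ⟨σ, hσ⟩ := exists_sort hi w
      refine ⟨⟨⟨w * ePerm hi σ, hσ⟩, σ⁻¹⟩, ?_⟩
      simp only
      rw [mul_assoc, ePerm_mul, mul_inv_cancel, ePerm_one, mul_one]
  rw [Fintype.card_prod, Fintype.card_perm, Fintype.card_fin, Fintype.card_perm,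
    Fintype.card_fin, Fintype.card_subtype] at key
  exact key

open Finset

lemma derangQ (n : ℕ) :
    (numDerangements n : ℚ) = n.factorial * ∑ k ∈ Finset.range (n + 1), (-1 : ℚ) ^ k / k.factorial := by
  have h := numDerangements_sum n
  have h2 : ((numDerangements n : ℤ) : ℚ) = ∑ k ∈ Finset.range (n+1), (-1:ℚ)^k * ((k+1).ascFactorial (n-k) : ℚ) := by
    rw [h]; push_cast; refine Finset.sum_congr rfl fun k _ => by rfl
  rw [Int.cast_natCast] at h2
  rw [h2, Finset.mul_sum]
  refine Finset.sum_congr rfl fun k hk => ?_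
  have hk' : k ≤ n := Nat.lt_succ_iff.mp (Finset.mem_range.mp hk)
  have key : (k.factorial : ℚ) * ((k+1).ascFactorial (n-k) : ℚ) = (n.factorial : ℚ) := by
    rw [← Nat.cast_mul, Nat.factorial_mul_ascFactorial, Nat.add_sub_cancel' hk']
  have hkf : (k.factorial : ℚ) ≠ 0 := Nat.cast_ne_zero.mpr k.factorial_ne_zero
  field_simp
  linear_combination key

/-- The number of desarrangements of `{1,...,n}` equals the number of
derangements of `{1,...,n}`, i.e. equals `d_n = n!·Σ_{k=0}^n (-1)^k/k!`. -/
theorem card_desarrangements (n : ℕ) (hn : 1 ≤ n) :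
    Nat.card {w : Equiv.Perm (Fin n) // IsDesarrangement w} =
      Nat.card {w : Equiv.Perm (Fin n) // ∀ i, w i ≠ i} ∧
    (Nat.card {w : Equiv.Perm (Fin n) // IsDesarrangement w} : ℚ) =
      n.factorial * ∑ k ∈ Finset.range (n + 1), (-1 : ℚ) ^ k / k.factorial := by
  classical
  have hne : ∀ w : Equiv.Perm (Fin n), (nonDescents w).Nonempty :=
    fun w => ⟨n, n_mem_nonDescents hn w⟩
  set M : Equiv.Perm (Fin n) → ℕ := fun w => (nonDescents w).min' (hne w) with hM
  have hM_mem : ∀ w, M w ∈ nonDescents w := fun w => Finset.min'_mem _ _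
  have hM_Icc : ∀ w, 1 ≤ M w ∧ M w ≤ n := by
    intro w
    have h := hM_mem w
    unfold nonDescents at h
    rw [Finset.mem_filter, Finset.mem_Icc] at h
    exact h.1
  have hdes : ∀ w, IsDesarrangement w ↔ Even (M w) := by
    intro w
    constructor
    · rintro ⟨i, hi, hev, hmin⟩
      have h1 : i ≤ M w := hmin _ (hM_mem w)
      have h2 : M w ≤ i := Finset.min'_le _ _ hi
      rwa [le_antisymm h1 h2] at hev
    · intro hev
      exact ⟨M w, hM_mem w, hev, fun j hj => Finset.min'_le _ _ hj⟩
  have hA : ∀ i, 1 ≤ i → i ≤ n →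
      ((Finset.univ.filter (fun w : Equiv.Perm (Fin n) => i ≤ M w)).card : ℚ) = qq n i := by
    intro i hi1 hi
    have h1 : Finset.univ.filter (fun w : Equiv.Perm (Fin n) => i ≤ M w)
        = Finset.univ.filter (DD n i) :=
      Finset.filter_congr (fun w _ => by
        rw [hM]
        simp only
        rw [Finset.le_min'_iff]
        exact le_min_iff_DD hi w)
    rw [h1]
    have h2 := DD_card_mul (n := n) (i := i) hi
    have hfac : (i.factorial : ℚ) ≠ 0 := Nat.cast_ne_zero.mpr i.factorial_ne_zero
    rw [qq, if_pos hi, eq_div_iff hfac]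
    exact_mod_cast congrArg (Nat.cast (R := ℚ)) h2
  have hA0 : (Finset.univ.filter (fun w : Equiv.Perm (Fin n) => n + 1 ≤ M w)) = ∅ := by
    apply Finset.filter_false_of_mem
    intro w _
    have := (hM_Icc w).2
    omega
  have hcount : (Nat.card {w : Equiv.Perm (Fin n) // IsDesarrangement w} : ℚ)
      = ∑ i ∈ Icc 1 n, (if Even i then qq n i - qq n (i+1) else 0) := by
    rw [Nat.card_eq_fintype_card, Fintype.card_subtype]
    have hstep : (Finset.univ.filter (fun w : Equiv.Perm (Fin n) => IsDesarrangement w))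
        = Finset.univ.filter (fun w => Even (M w)) :=
      Finset.filter_congr (fun w _ => by rw [hdes w])
    rw [hstep]
    rw [Finset.card_eq_sum_card_fiberwise (f := M) (t := (Icc 1 n).filter Even)
      (fun w hw => by
        rw [Finset.mem_coe, Finset.mem_filter] at hw ⊢
        exact ⟨Finset.mem_Icc.mpr (hM_Icc w), hw.2⟩)]
    push_cast
    rw [Finset.sum_filter]
    refine Finset.sum_congr rfl fun i hi => ?_
    obtain ⟨hi1, hin⟩ := Finset.mem_Icc.mp hi
    by_cases he : Even i
    · rw [if_pos he, if_pos he]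
      have hfib : (Finset.univ.filter (fun w : Equiv.Perm (Fin n) => Even (M w))).filter
            (fun w => M w = i)
          = Finset.univ.filter (fun w => M w = i) := by
        rw [Finset.filter_filter]
        exact Finset.filter_congr (fun w _ =>
          ⟨fun h => h.2, fun h => ⟨h ▸ he, h⟩⟩)
      rw [hfib]
      have hsplit : Finset.univ.filter (fun w : Equiv.Perm (Fin n) => i ≤ M w)
          = Finset.univ.filter (fun w => M w = i) ∪
            Finset.univ.filter (fun w => i + 1 ≤ M w) := by
        ext w
        simp only [Finset.mem_union, Finset.mem_filter, Finset.mem_univ, true_and]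
        omega
      have hdisj : Disjoint (Finset.univ.filter (fun w : Equiv.Perm (Fin n) => M w = i))
          (Finset.univ.filter (fun w => i + 1 ≤ M w)) := by
        rw [Finset.disjoint_left]
        intro w h1 h2
        rw [Finset.mem_filter] at h1 h2
        omega
      have hcards := congrArg (fun s : Finset (Equiv.Perm (Fin n)) => (s.card : ℚ)) hsplit
      rw [Finset.card_union_of_disjoint hdisj] at hcards
      push_cast at hcards
      have hAi := hA i hi1 hin
      have hAi1 : ((Finset.univ.filter
            (fun w : Equiv.Perm (Fin n) => i + 1 ≤ M w)).card : ℚ) = qq n (i+1) := by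
        rcases Nat.lt_or_ge i n with h | h
        · exact hA (i+1) (by omega) (by omega)
        · have hieq : i = n := le_antisymm hin h
          subst hieq
          rw [hA0, qq_gt (Nat.lt_succ_self i)]
          simp
      rw [hAi, hAi1] at hcards
      linarith
    · rw [if_neg he, if_neg he]
  have hq : (Nat.card {w : Equiv.Perm (Fin n) // IsDesarrangement w} : ℚ)
      = ∑ k ∈ Finset.range (n+1), (-1:ℚ)^k * (n.factorial / k.factorial) :=
    hcount.trans (sum_tele n hn)
  have hfinal : (Nat.card {w : Equiv.Perm (Fin n) // IsDesarrangement w} : ℚ)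
      = n.factorial * ∑ k ∈ Finset.range (n + 1), (-1 : ℚ) ^ k / k.factorial := by
    rw [hq, Finset.mul_sum]
    exact Finset.sum_congr rfl fun k _ => by ring
  refine ⟨?_, hfinal⟩
  have hderang : Nat.card {w : Equiv.Perm (Fin n) // ∀ i, w i ≠ i} = numDerangements n := by
    rw [Nat.card_congr (Equiv.subtypeEquivRight (p := fun w : Equiv.Perm (Fin n) => ∀ i, w i ≠ i) (q := fun w : Equiv.Perm (Fin n) => w ∈ derangements (Fin n)) (fun w => Iff.rfl))]
    rw [Nat.card_eq_fintype_card, card_derangements_eq_numDerangements, Fintype.card_fin]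
  have : (Nat.card {w : Equiv.Perm (Fin n) // IsDesarrangement w} : ℚ)
      = (Nat.card {w : Equiv.Perm (Fin n) // ∀ i, w i ≠ i} : ℚ) := by
    rw [hfinal, hderang, derangQ n]
  exact_mod_cast this
end
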